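/- arXiv:2310.01326 — 2 statements merged into one kernel-verified Lean document; each statement's English description precedes it below -/
import Mathlib

section
/- In the noiseless single-observation model y = Π^♮ x β with β ≠ 0 and ⟨x, Π^♮ x⟩ > 0, every permutation matrix Π maximizing ⟨Π, y yᵀ x xᵀ⟩ satisfies Π x = Π^♮ x. -/
open Matrix

noncomputable def permMat {n : ℕ} (σ : Equiv.Perm (Fin n)) : Matrix (Fin n) (Fin n) ℝ :=
  Matrix.of fun i j => if j = σ i then (1 : ℝ) else 0

noncomputable def tip {a b : ℕ} (A B : Matrix (Fin a) (Fin b) ℝ) : ℝ :=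
  (Aᵀ * B).trace

lemma permMat_mulVec {n : ℕ} (τ : Equiv.Perm (Fin n)) (x : Fin n → ℝ) :
    permMat τ *ᵥ x = fun i => x (τ i) := by
  funext i
  simp [permMat, mulVec, dotProduct]

lemma tip_eq {n : ℕ} (τ : Equiv.Perm (Fin n)) (x y : Fin n → ℝ) :
    tip (permMat τ) (vecMulVec y y * vecMulVec x x)
      = (y ⬝ᵥ x) * ∑ k, y k * x (τ k) := by
  simp only [tip, trace, diag, Matrix.mul_apply, transpose_apply, permMat,
    vecMulVec_apply, Matrix.of_apply, dotProduct]
  rw [Finset.sum_comm, Finset.mul_sum]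
  refine Finset.sum_congr rfl fun k _ => ?_
  rw [Finset.sum_eq_single (τ k)]
  · rw [if_pos rfl, one_mul, Finset.sum_mul]
    refine Finset.sum_congr rfl fun m _ => by ring
  · intro j _ hj; rw [if_neg hj]; ring
  · simp

/-- In the noiseless single-observation model `y = Π♮ x β` with `β ≠ 0` and
`⟨x, Π♮ x⟩ > 0`, any maximizer `Π` of `⟨Π, y yᵀ x xᵀ⟩` satisfies `Π x = Π♮ x`. -/
theorem stmt3 {n : ℕ} (x : Fin n → ℝ) (β : ℝ) (σnat : Equiv.Perm (Fin n))
    (hβ : β ≠ 0) (hx : 0 < x ⬝ᵥ (permMat σnat *ᵥ x))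
    (y : Fin n → ℝ) (hy : y = β • (permMat σnat *ᵥ x))
    (σ : Equiv.Perm (Fin n))
    (hmax : ∀ τ : Equiv.Perm (Fin n),
      tip (permMat τ) (vecMulVec y y * vecMulVec x x)
        ≤ tip (permMat σ) (vecMulVec y y * vecMulVec x x)) :
    permMat σ *ᵥ x = permMat σnat *ᵥ x := by
  set u : Fin n → ℝ := fun k => x (σnat k) with hu
  set v : Fin n → ℝ := fun k => x (σ k) with hv
  have hS : (0:ℝ) < ∑ k, x k * u k := by
    simpa [dotProduct, permMat_mulVec] using hx
  have hyk : y = fun k => β * u k := by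
    rw [hy, permMat_mulVec]; rfl
  have hyx : y ⬝ᵥ x = β * ∑ k, x k * u k := by
    simp only [hyk, dotProduct, Finset.mul_sum]
    exact Finset.sum_congr rfl fun k _ => by ring
  have key := hmax σnat
  rw [tip_eq, tip_eq, hyx, hyk] at key
  have aux : ∀ w : Fin n → ℝ,
      (β * ∑ k, x k * u k) * ∑ k, (fun k => β * u k) k * w k
        = (β ^ 2 * ∑ k, x k * u k) * ∑ k, u k * w k := by
    intro w
    have : ∑ k, (fun k => β * u k) k * w k = β * ∑ k, u k * w k := by
      rw [Finset.mul_sum]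
      exact Finset.sum_congr rfl fun k _ => by ring
    rw [this]; ring
  rw [aux (fun k => x (σnat k)), aux (fun k => x (σ k))] at key
  have hmain : ∑ k, u k * u k ≤ ∑ k, u k * v k :=
    le_of_mul_le_mul_left key (by positivity)
  have hvv : ∑ k, v k * v k = ∑ k, u k * u k := by
    have e1 : ∑ k, v k * v k = ∑ k, x k * x k :=
      Equiv.sum_comp σ (fun k => x k * x k)
    have e2 : ∑ k, u k * u k = ∑ k, x k * x k :=
      Equiv.sum_comp σnat (fun k => x k * x k)
    rw [e1, e2]
  have hsq : ∑ k, (u k - v k) ^ 2 ≤ 0 := by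
    have heq : ∑ k, (u k - v k) ^ 2
        = (∑ k, u k * u k) - 2 * (∑ k, u k * v k) + ∑ k, v k * v k := by
      rw [Finset.mul_sum, ← Finset.sum_sub_distrib, ← Finset.sum_add_distrib]
      exact Finset.sum_congr rfl fun k _ => by ring
    rw [heq, hvv]; linarith
  have hsum0 : ∑ k, (u k - v k) ^ 2 = 0 :=
    le_antisymm hsq (Finset.sum_nonneg fun k _ => sq_nonneg _)
  have hzero : ∀ k ∈ Finset.univ, (u k - v k) ^ 2 = 0 :=
    (Finset.sum_eq_zero_iff_of_nonneg fun k _ => sq_nonneg _).mp hsum0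
  funext i
  rw [permMat_mulVec, permMat_mulVec]
  have h0 : u i - v i = 0 :=
    pow_eq_zero_iff (n := 2) (by norm_num) |>.mp (hzero i (Finset.mem_univ i))
  simp only [hu, hv] at h0
  linarith
end

section
/- Let π be a permutation of {1,…,n} with exactly h non-fixed points (h = |{i : π(i) ≠ i}|). Then the set {i : π(i) ≠ i} can be partitioned into 3 disjoint sets I₁, I₂, I₃ such that for each ℓ, no index i ∈ I_ℓ has π(i) ∈ I_ℓ, and each set has cardinality at least ⌊h/3⌋; in particular |I_ℓ| ≥ h/5 for h large enough. -/
open Finset Equiv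

/-- coloring pattern along a cycle of length `k` -/
def pat (k m : ℕ) : Fin 3 :=
  if k % 3 = 1 then
    if m = k - 2 then 0 else if m = k - 1 then 2
    else ⟨m % 3, Nat.mod_lt _ (by norm_num)⟩
  else ⟨m % 3, Nat.mod_lt _ (by norm_num)⟩

lemma pat_ne_succ {k m : ℕ} (hm : m + 1 < k) : pat k m ≠ pat k (m + 1) := by
  unfold pat
  split_ifs <;> simp_all [Fin.ext_iff] <;> omega

lemma pat_ne_zero {k : ℕ} (hk : 2 ≤ k) : pat k (k - 1) ≠ pat k 0 := by
  unfold pat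
  split_ifs <;> simp_all [Fin.ext_iff] <;> omega

lemma count_mod3 (k j : ℕ) (hj3 : j < 3) : #((range k).filter fun m => m % 3 = j) = (k + 2 - j) / 3 := by
  induction k with
  | zero => simp; omega
  | succ k ih =>
    rw [range_add_one, filter_insert]
    split_ifs with hj
    · rw [card_insert_of_notMem (by simp)]
      omega
    · omega

lemma cnt_eq {k : ℕ} (hk : 2 ≤ k) (ℓ : Fin 3) :
    #((range k).filter fun m => pat k m = ℓ) = (k + 2 - ℓ.val) / 3 := by
  by_cases hr : k % 3 = 1
  · have hk4 : 4 ≤ k := by omega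
    have : #((range k).filter fun m => pat k m = ℓ)
        = #((range k).filter fun m => m % 3 = ℓ.val) := by
      apply card_nbij' (fun m => if m = k-2 then k-1 else if m = k-1 then k-2 else m)
        (fun m => if m = k-2 then k-1 else if m = k-1 then k-2 else m)
      · intro m hm
        simp only [mem_coe, mem_filter, mem_range] at hm ⊢
        obtain ⟨h1, h2⟩ := hm
        unfold pat at h2
        rw [if_pos hr] at h2
        split_ifs at h2 ⊢ with ha hb <;>
          simp_all [Fin.ext_iff] <;> omega
      · intro m hm
        simp only [mem_coe, mem_filter, mem_range] at hm ⊢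
        obtain ⟨h1, h2⟩ := hm
        unfold pat
        rw [if_pos hr]
        split_ifs with ha hb <;>
          simp_all [Fin.ext_iff] <;> omega
      · intro m _; beta_reduce; split_ifs <;> simp_all <;> omega
      · intro m _; beta_reduce; split_ifs <;> simp_all <;> omega
    rw [this, count_mod3 _ _ ℓ.isLt]
  · have : ((range k).filter fun m => pat k m = ℓ)
        = ((range k).filter fun m => m % 3 = ℓ.val) := by
      apply filter_congr
      intro m _
      unfold pat
      rw [if_neg hr]
      simp [Fin.ext_iff]
    rw [this, count_mod3 _ _ ℓ.isLt]

lemma key3 : ∀ e f : Fin 3 → Bool, ∃ p : Fin 3 → Fin 3, Function.Bijective p ∧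
    ∀ i j : Fin 3, (e i).toNat + (f (p i)).toNat ≤ (e j).toNat + (f (p j)).toNat + 1 := by
  decide

lemma pair3 (a b : Fin 3 → ℕ) (ha : ∀ i j, a i ≤ a j + 1) (hb : ∀ i j, b i ≤ b j + 1) :
    ∃ p : Fin 3 → Fin 3, Function.Bijective p ∧
      ∀ i j, a i + b (p i) ≤ a j + b (p j) + 1 := by
  set ma := min (a 0) (min (a 1) (a 2)) with hma
  set mb := min (b 0) (min (b 1) (b 2)) with hmb
  have hmema : ∀ i : Fin 3, a i = a 0 ∨ a i = a 1 ∨ a i = a 2 := by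
    intro i; fin_cases i <;> simp
  have hmemb : ∀ i : Fin 3, b i = b 0 ∨ b i = b 1 ∨ b i = b 2 := by
    intro i; fin_cases i <;> simp
  have hba : ∀ i, ma ≤ a i ∧ a i ≤ ma + 1 := by
    intro i
    have h0 := ha i 0; have h1 := ha i 1; have h2 := ha i 2
    have := hmema i; omega
  have hbb : ∀ i, mb ≤ b i ∧ b i ≤ mb + 1 := by
    intro i
    have h0 := hb i 0; have h1 := hb i 1; have h2 := hb i 2
    have := hmemb i; omega
  have hda : ∀ i, (decide (a i = ma + 1)).toNat = a i - ma := by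
    intro i
    by_cases h : a i = ma + 1
    · rw [decide_eq_true h]; have := hba i; simp; omega
    · rw [decide_eq_false h]; have := hba i; simp; omega
  have hdb : ∀ i, (decide (b i = mb + 1)).toNat = b i - mb := by
    intro i
    by_cases h : b i = mb + 1
    · rw [decide_eq_true h]; have := hbb i; simp; omega
    · rw [decide_eq_false h]; have := hbb i; simp; omega
  obtain ⟨p, hbij, hsp⟩ := key3 (fun i => decide (a i = ma + 1)) (fun i => decide (b i = mb + 1))
  refine ⟨p, hbij, fun i j => ?_⟩
  have hs := hsp i j
  simp only [hda, hdb] at hs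
  have b1 := hba i; have b2 := hba j; have b3 := hbb (p i); have b4 := hbb (p j)
  omega

/-- An equitable proper 3-coloring of the support of a permutation. -/
def Good {n : ℕ} (σ : Equiv.Perm (Fin n)) : Prop :=
  ∃ I : Fin 3 → Finset (Fin n),
    (∀ a b : Fin 3, a ≠ b → Disjoint (I a) (I b)) ∧
    (I 0 ∪ I 1 ∪ I 2 = σ.support) ∧
    (∀ (ℓ : Fin 3) (i : Fin n), i ∈ I ℓ → σ i ∉ I ℓ) ∧
    (∀ a b : Fin 3, (I a).card ≤ (I b).card + 1)

lemma good_cycle {n : ℕ} (σ : Equiv.Perm (Fin n)) (hc : σ.IsCycle) : Good σ := by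
  classical
  obtain ⟨x, hx, hsc⟩ := hc
  have hc' : σ.IsCycle := ⟨x, hx, hsc⟩
  set k := σ.support.card with hkdef
  have hord : orderOf σ = k := hc'.orderOf
  have hk2 : 2 ≤ k := hc'.two_le_card_support
  have hxs : x ∈ σ.support := Equiv.Perm.mem_support.mpr hx
  set g : ℕ → Fin n := fun m => (σ ^ m) x with hg
  have hgs : ∀ m, g m ∈ σ.support := fun m => Equiv.Perm.pow_apply_mem_support.mpr hxs
  have hginj : ∀ a, a < k → ∀ b, b < k → g a = g b → a = b := by
    have key : ∀ a b, a ≤ b → b < k → g a = g b → a = b := by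
      intro a b hab hbk hgab
      have h1 : (σ ^ (b - a)) ((σ ^ a) x) = (σ ^ a) x := by
        have : (σ ^ (b - a)) ((σ ^ a) x) = (σ ^ b) x := by
          have hba : b - a + a = b := by omega
          rw [← Equiv.Perm.mul_apply, ← pow_add, hba]
        rw [this]; exact hgab.symm
      have hmove : σ ((σ ^ a) x) ≠ (σ ^ a) x :=
        Equiv.Perm.mem_support.mp (Equiv.Perm.pow_apply_mem_support.mpr hxs)
      have hone : σ ^ (b - a) = 1 := (hc'.pow_eq_one_iff' hmove).mpr h1
      have hdvd : orderOf σ ∣ (b - a) := orderOf_dvd_of_pow_eq_one hone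
      rcases Nat.eq_zero_or_pos (b - a) with h | h
      · omega
      · exfalso
        have := Nat.le_of_dvd h hdvd
        omega
    intro a ha b hb hab
    rcases le_total a b with h | h
    · exact key a b h hb hab
    · exact (key b a h ha hab.symm).symm
  have hgsurj : ∀ y ∈ σ.support, ∃ m, m < k ∧ g m = y := by
    intro y hy
    obtain ⟨i, hi, hiy⟩ := (hsc (Equiv.Perm.mem_support.mp hy)).exists_pow_eq'
    exact ⟨i, by omega, hiy⟩
  refine ⟨fun ℓ => ((range k).filter fun m => pat k m = ℓ).image g, ?_, ?_, ?_, ?_⟩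
  · intro a b hab
    rw [Finset.disjoint_left]
    rintro y hya hyb
    simp only [mem_image, mem_filter, mem_range] at hya hyb
    obtain ⟨m, ⟨hmk, hmp⟩, hmy⟩ := hya
    obtain ⟨m', ⟨hmk', hmp'⟩, hmy'⟩ := hyb
    have : m = m' := hginj m hmk m' hmk' (by rw [hmy, hmy'])
    exact hab (by rw [← hmp, ← hmp', this])
  · ext y
    simp only [Finset.mem_union, mem_image, mem_filter, mem_range]
    constructor
    · rintro ((⟨m, _, hmy⟩ | ⟨m, _, hmy⟩) | ⟨m, _, hmy⟩) <;> exact hmy ▸ hgs m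
    · intro hy
      obtain ⟨m, hmk, hmy⟩ := hgsurj y hy
      have : pat k m = 0 ∨ pat k m = 1 ∨ pat k m = 2 := by
        have := (pat k m).isLt
        rcases h : pat k m with ⟨v, hv⟩
        interval_cases v <;> simp [Fin.ext_iff]
      rcases this with h | h | h
      · exact Or.inl (Or.inl ⟨m, ⟨hmk, h⟩, hmy⟩)
      · exact Or.inl (Or.inr ⟨m, ⟨hmk, h⟩, hmy⟩)
      · exact Or.inr ⟨m, ⟨hmk, h⟩, hmy⟩
  · intro ℓ y hy hy'
    simp only [mem_image, mem_filter, mem_range] at hy hy'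
    obtain ⟨m, ⟨hmk, hmp⟩, hmy⟩ := hy
    obtain ⟨m', ⟨hmk', hmp'⟩, hmy'⟩ := hy'
    have hσy : σ y = g (m + 1) := by
      rw [← hmy, hg]
      simp only []
      rw [← Equiv.Perm.mul_apply, ← pow_succ']
    by_cases hm1 : m + 1 < k
    · have : m' = m + 1 := hginj m' hmk' (m + 1) hm1 (by rw [hmy', hσy])
      exact pat_ne_succ hm1 (by rw [← this]; exact hmp.trans hmp'.symm)
    · have hmk1 : m = k - 1 := by omega
      have hgk : g (m + 1) = g 0 := by
        have : m + 1 = k := by omega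
        rw [this, hg]
        simp only []
        rw [← hord, pow_orderOf_eq_one, pow_zero]
      have : m' = 0 := hginj m' hmk' 0 (by omega) (by rw [hmy', hσy, hgk])
      exact pat_ne_zero hk2 (by rw [← hmk1, ← this]; exact hmp.trans hmp'.symm)
  · intro a b
    have hcard : ∀ ℓ : Fin 3, (((range k).filter fun m => pat k m = ℓ).image g).card
        = (k + 2 - ℓ.val) / 3 := by
      intro ℓ
      rw [Finset.card_image_of_injOn, cnt_eq hk2]
      intro u hu v hv huv
      simp only [Finset.coe_filter, Set.mem_setOf_eq, Finset.mem_range] at hu hv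
      exact hginj u hu.1 v hv.1 huv
    rw [hcard, hcard]
    have := a.isLt; have := b.isLt
    omega

lemma good_mul {n : ℕ} (σ τ : Equiv.Perm (Fin n)) (hd : σ.Disjoint τ)
    (hσ : Good σ) (hτ : Good τ) : Good (σ * τ) := by
  classical
  obtain ⟨I, hIdis, hIun, hIpr, hIcard⟩ := hσ
  obtain ⟨J, hJdis, hJun, hJpr, hJcard⟩ := hτ
  obtain ⟨p, hpbij, hpsp⟩ := pair3 (fun ℓ => (I ℓ).card) (fun ℓ => (J ℓ).card) hIcard hJcard
  have hds : _root_.Disjoint σ.support τ.support :=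
    Equiv.Perm.disjoint_iff_disjoint_support.mp hd
  have hIsub : ∀ ℓ, I ℓ ⊆ σ.support := by
    intro ℓ
    rw [← hIun]
    fin_cases ℓ
    · exact (subset_union_left.trans subset_union_left)
    · exact (subset_union_right.trans subset_union_left)
    · exact subset_union_right
  have hJsub : ∀ ℓ, J ℓ ⊆ τ.support := by
    intro ℓ
    rw [← hJun]
    fin_cases ℓ
    · exact (subset_union_left.trans subset_union_left)
    · exact (subset_union_right.trans subset_union_left)
    · exact subset_union_right
  have hIJ : ∀ a b, Disjoint (I a) (J b) := fun a b =>
    hds.mono (hIsub a) (hJsub b)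
  refine ⟨fun ℓ => I ℓ ∪ J (p ℓ), ?_, ?_, ?_, ?_⟩
  · intro a b hab
    rw [Finset.disjoint_union_left]
    constructor
    · rw [Finset.disjoint_union_right]
      exact ⟨hIdis a b hab, hIJ a (p b)⟩
    · rw [Finset.disjoint_union_right]
      exact ⟨(hIJ b (p a)).symm, hJdis (p a) (p b) (fun h => hab (hpbij.1 h))⟩
  · have hJU : J (p 0) ∪ J (p 1) ∪ J (p 2) = J 0 ∪ J 1 ∪ J 2 := by
      ext y
      simp only [Finset.mem_union]
      have hall : ∀ c : Fin 3, y ∈ J c → (y ∈ J 0 ∨ y ∈ J 1) ∨ y ∈ J 2 := by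
        intro c hy; fin_cases c
        · exact Or.inl (Or.inl hy)
        · exact Or.inl (Or.inr hy)
        · exact Or.inr hy
      have hallp : ∀ c : Fin 3, y ∈ J c → (y ∈ J (p 0) ∨ y ∈ J (p 1)) ∨ y ∈ J (p 2) := by
        intro c hy
        obtain ⟨a, ha⟩ := hpbij.2 c
        subst ha
        fin_cases a
        · exact Or.inl (Or.inl hy)
        · exact Or.inl (Or.inr hy)
        · exact Or.inr hy
      constructor
      · rintro ((h | h) | h)
        · exact hall _ h
        · exact hall _ h
        · exact hall _ h
      · rintro ((h | h) | h)
        · exact hallp _ h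
        · exact hallp _ h
        · exact hallp _ h
    have : (I 0 ∪ J (p 0)) ∪ (I 1 ∪ J (p 1)) ∪ (I 2 ∪ J (p 2))
        = (I 0 ∪ I 1 ∪ I 2) ∪ (J (p 0) ∪ J (p 1) ∪ J (p 2)) := by
      ext y
      simp only [Finset.mem_union]
      tauto
    rw [this, hJU, hIun, hJun, hd.support_mul]
  · intro ℓ i hi
    rcases Finset.mem_union.mp hi with hiI | hiJ
    · have hiσ : i ∈ σ.support := hIsub ℓ hiI
      have hτi : τ i = i := Equiv.Perm.notMem_support.mp (Finset.disjoint_left.mp hds hiσ)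
      have happ : (σ * τ) i = σ i := by
        rw [Equiv.Perm.mul_apply, hτi]
      rw [happ]
      intro hmem
      have hσi : σ i ∈ σ.support := Equiv.Perm.apply_mem_support.mpr hiσ
      rcases Finset.mem_union.mp hmem with h | h
      · exact hIpr ℓ i hiI h
      · exact Finset.disjoint_left.mp hds hσi (hJsub _ h)
    · have hiτ : i ∈ τ.support := hJsub _ hiJ
      have hτi : τ i ∈ τ.support := Equiv.Perm.apply_mem_support.mpr hiτ
      have happ : (σ * τ) i = τ i := by
        rw [Equiv.Perm.mul_apply,
          Equiv.Perm.notMem_support.mp (Finset.disjoint_right.mp hds hτi)]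
      rw [happ]
      intro hmem
      rcases Finset.mem_union.mp hmem with h | h
      · exact Finset.disjoint_right.mp hds hτi (hIsub _ h)
      · exact hJpr (p ℓ) i hiJ h
  · intro a b
    rw [Finset.card_union_of_disjoint (hIJ a (p a)),
      Finset.card_union_of_disjoint (hIJ b (p b))]
    exact hpsp a b

lemma good_all {n : ℕ} (π : Equiv.Perm (Fin n)) : Good π := by
  induction π using Equiv.Perm.cycle_induction_on with
  | base_one =>
    exact ⟨fun _ => ∅, fun _ _ _ => Finset.disjoint_empty_left _,
      by simp [Equiv.Perm.support_one], fun _ _ h => absurd h (Finset.notMem_empty _),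
      fun _ _ => by simp⟩
  | base_cycles σ hσ => exact good_cycle σ hσ
  | induction_disjoint σ τ hd hc hσ hτ => exact good_mul σ τ hd hσ hτ

/-- The non-fixed points of a permutation with `h` non-fixed points can be split into
three disjoint blocks, each separating `i` from `π i`, with each block of size
at least `⌊h/3⌋`. -/
theorem stmt9 {n : ℕ} (π : Equiv.Perm (Fin n)) (h : ℕ)
    (hh : h = (Finset.univ.filter fun i : Fin n => π i ≠ i).card) :
    ∃ I : Fin 3 → Finset (Fin n),
      (∀ a b : Fin 3, a ≠ b → Disjoint (I a) (I b)) ∧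
      (I 0 ∪ I 1 ∪ I 2 = Finset.univ.filter fun i : Fin n => π i ≠ i) ∧
      (∀ (ℓ : Fin 3) (i : Fin n), i ∈ I ℓ → π i ∉ I ℓ) ∧
      (∀ ℓ : Fin 3, h / 3 ≤ (I ℓ).card) := by
  classical
  obtain ⟨I, hdis, hun, hpr, hcard⟩ := good_all π
  have hsupp : π.support = Finset.univ.filter fun i : Fin n => π i ≠ i := by
    ext i; simp [Equiv.Perm.mem_support]
  refine ⟨I, hdis, by rw [hun, hsupp], hpr, ?_⟩
  have hsum : (I 0).card + (I 1).card + (I 2).card = h := by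
    rw [hh, ← hsupp, ← hun,
      Finset.card_union_of_disjoint, Finset.card_union_of_disjoint (hdis 0 1 (by decide))]
    rw [Finset.disjoint_union_left]
    exact ⟨hdis 0 2 (by decide), hdis 1 2 (by decide)⟩
  have h01 := hcard 0 1; have h02 := hcard 0 2; have h10 := hcard 1 0
  have h12 := hcard 1 2; have h20 := hcard 2 0; have h21 := hcard 2 1
  intro ℓ
  fin_cases ℓ
  · show h / 3 ≤ (I 0).card; omega
  · show h / 3 ≤ (I 1).card; omega
  · show h / 3 ≤ (I 2).card; omega
end
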